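/- In an abelian category, a nonzero object of finite length is indecomposable if and only if its endomorphism ring is local. -/

import Mathlib

open CategoryTheory CategoryTheory.Limits

attribute [local instance] CategoryTheory.Abelian.hasFiniteBiproducts

/-- An object of an abelian category is indecomposable if it is nonzero and in
any direct sum decomposition one of the summands is zero. -/
def IndecomposableObj {C : Type u} [Category.{v} C] [Abelian C] (X : C) : Prop :=
  ¬ IsZero X ∧ ∀ (Y Z : C), (X ≅ Y ⊞ Z) → IsZero Y ∨ IsZero Z

section Aux

open CategoryTheory.Abelian CategoryTheory.Abelian.Pseudoelement

attribute [local instance] CategoryTheory.Abelian.Pseudoelement.objectToSort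
  CategoryTheory.Abelian.Pseudoelement.setoid
  CategoryTheory.Abelian.Pseudoelement.overToSort
  CategoryTheory.Abelian.Pseudoelement.homToFun

variable {C : Type u} [Category.{v} C] [Abelian C]

/-- A pair of split idempotents summing to the identity gives a biproduct decomposition. -/
lemma aux_biprod_iso {X Y Z : C} (p : X ⟶ Y) (i : Y ⟶ X) (q : X ⟶ Z) (j : Z ⟶ X)
    (hip : i ≫ p = 𝟙 Y) (hjq : j ≫ q = 𝟙 Z) (hsum : p ≫ i + q ≫ j = 𝟙 X) :
    Nonempty (X ≅ Y ⊞ Z) := by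
  haveI : IsSplitMono j := IsSplitMono.mk' ⟨q, hjq⟩
  haveI : IsSplitMono i := IsSplitMono.mk' ⟨p, hip⟩
  have hiq : i ≫ q = 0 := by
    have h1 : i ≫ (p ≫ i + q ≫ j) = i := by rw [hsum, Category.comp_id]
    rw [Preadditive.comp_add, ← Category.assoc, hip, Category.id_comp] at h1
    have h2 : (i ≫ q) ≫ j = 0 ≫ j := by
      rw [Category.assoc, zero_comp]
      exact add_eq_left.mp h1
    exact (cancel_mono j).mp h2
  have hjp : j ≫ p = 0 := by
    have h1 : j ≫ (p ≫ i + q ≫ j) = j := by rw [hsum, Category.comp_id]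
    rw [Preadditive.comp_add, ← Category.assoc j q, hjq, Category.id_comp] at h1
    have h2 : (j ≫ p) ≫ i = 0 ≫ i := by
      rw [Category.assoc, zero_comp]
      exact add_eq_right.mp h1
    exact (cancel_mono i).mp h2
  refine ⟨⟨biprod.lift p q, biprod.desc i j, by rw [biprod.lift_desc, hsum], ?_⟩⟩
  apply biprod.hom_ext' <;> apply biprod.hom_ext <;>
    simp [hip, hjq, hiq, hjp]

lemma aux_unit_or_nilpotent {X : C} (_hart : IsArtinianObject X) (_hnoeth : IsNoetherianObject X)
    (hind : ∀ (Y Z : C), (X ≅ Y ⊞ Z) → IsZero Y ∨ IsZero Z) (f : End X) :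
    IsUnit f ∨ IsNilpotent f := by
  classical
  -- the chain of kernels
  let K : ℕ →o Subobject X :=
    ⟨fun m => kernelSubobject ((f ^ m : End X) : X ⟶ X), by
      apply monotone_nat_of_le_succ
      intro m
      have h : ((f ^ (m + 1) : End X) : X ⟶ X) = ((f ^ m : End X) : X ⟶ X) ≫ f := by
        rw [pow_succ']; rfl
      rw [h]
      exact kernelSubobject_comp_le _ f⟩
  obtain ⟨n₁, hn₁⟩ := wellFoundedGT_iff_monotone_chain_condition.1
    (by haveI := _hnoeth; infer_instance) K
  -- the chain of images
  let I : ℕ →o (Subobject X)ᵒᵈ :=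
    ⟨fun m => OrderDual.toDual (imageSubobject ((f ^ m : End X) : X ⟶ X)), by
      apply monotone_nat_of_le_succ
      intro m
      have h : ((f ^ (m + 1) : End X) : X ⟶ X) = f ≫ ((f ^ m : End X) : X ⟶ X) := by
        rw [pow_succ]; rfl
      show imageSubobject ((f ^ (m + 1) : End X) : X ⟶ X) ≤ _
      rw [h]
      exact imageSubobject_comp_le f _⟩
  have hwf : WellFounded ((· > ·) : (Subobject X)ᵒᵈ → (Subobject X)ᵒᵈ → Prop) :=
    by haveI := _hart; exact (wellFounded_lt : WellFounded ((· < ·) : Subobject X → Subobject X → Prop))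
  obtain ⟨n₂, hn₂⟩ := wellFoundedGT_iff_monotone_chain_condition.1 ⟨hwf⟩ I
  set n : ℕ := n₁ + n₂ + 1 with hn
  have hle1 : n₁ ≤ n := by omega
  have hle2 : n₂ ≤ n := by omega
  have hK : kernelSubobject ((f ^ n : End X) : X ⟶ X)
      = kernelSubobject ((f ^ (n + n) : End X) : X ⟶ X) :=
    (hn₁ n hle1).symm.trans (hn₁ (n + n) (by omega))
  have hI : imageSubobject ((f ^ n : End X) : X ⟶ X)
      = imageSubobject ((f ^ (n + n) : End X) : X ⟶ X) :=
    congrArg OrderDual.ofDual ((hn₂ n hle2).symm.trans (hn₂ (n + n) (by omega)))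
  set Fn : X ⟶ X := ((f ^ n : End X) : X ⟶ X) with hFn
  set F2 : X ⟶ X := ((f ^ (n + n) : End X) : X ⟶ X) with hF2
  have hcomp : F2 = Fn ≫ Fn := by rw [hF2, pow_add]; rfl
  set J : C := (imageSubobject Fn : C) with hJ
  set π : X ⟶ J := factorThruImageSubobject Fn with hπ
  set ι : J ⟶ X := (imageSubobject Fn).arrow with hι
  have fac : π ≫ ι = Fn := imageSubobject_arrow_comp Fn
  set g : J ⟶ J := ι ≫ π with hg
  have hgι : g ≫ ι = ι ≫ Fn := by rw [hg, Category.assoc, fac]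
  -- kernel stabilization, morphism level
  have hker : ∀ {A : C} (a : A ⟶ X), a ≫ F2 = 0 → a ≫ Fn = 0 := by
    intro A a h
    have hf : (kernelSubobject F2).Factors a := kernelSubobject_factors _ _ h
    rw [← hK] at hf
    rw [← Subobject.factorThru_arrow _ _ hf, Category.assoc, kernelSubobject_arrow_comp,
      comp_zero]
  have hmono : Mono g := by
    apply mono_of_zero_of_map_zero
    intro a ha
    obtain ⟨y, hy⟩ := pseudo_surjective_of_epi π a
    have h1 : Fn (ι a) = 0 := by
      rw [← Pseudoelement.comp_apply, ← hgι, Pseudoelement.comp_apply, ha, apply_zero]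
    have h2 : ι a = Fn y := by rw [← hy, ← Pseudoelement.comp_apply, fac]
    have h3 : F2 y = 0 := by rw [hcomp, Pseudoelement.comp_apply, ← h2, h1]
    have h4 : Fn y = 0 := by
      revert h3
      refine Quotient.inductionOn y (fun b h3 => ?_)
      have hb : b.hom ≫ F2 = 0 := by
        rw [pseudoApply_mk'] at h3
        exact (pseudoZero_iff _).1 h3
      rw [pseudoApply_mk']
      exact (pseudoZero_iff _).2 (hker _ hb)
    have h5 : ι a = (0 : Pseudoelement X) := by rw [h2, h4]
    exact zero_of_map_zero ι (pseudo_injective_of_mono ι) a h5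
  have hepi : Epi g := by
    apply epi_of_pseudo_surjective
    intro x
    have hle : imageSubobject Fn ≤ imageSubobject F2 := le_of_eq hI
    obtain ⟨u, hu⟩ := pseudo_surjective_of_epi (factorThruImageSubobject F2)
      ((Subobject.ofLE _ _ hle) x)
    refine ⟨π u, ?_⟩
    apply pseudo_injective_of_mono ι
    have lhs : ι (g (π u)) = F2 u := by
      rw [← Pseudoelement.comp_apply g ι, hgι, Pseudoelement.comp_apply,
        ← Pseudoelement.comp_apply π ι, fac, ← Pseudoelement.comp_apply, ← hcomp]
    have rhs : ι x = F2 u := by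
      rw [hι, ← Subobject.ofLE_arrow hle, Pseudoelement.comp_apply, ← hu,
        ← Pseudoelement.comp_apply, imageSubobject_arrow_comp]
    rw [lhs, rhs]
  haveI : IsIso g := isIso_of_mono_of_epi g
  set e : X ⟶ X := π ≫ inv g ≫ ι with he
  have hIsplit : ι ≫ π ≫ inv g = 𝟙 J := by
    rw [← Category.assoc, ← hg, IsIso.hom_inv_id]
  have hee : e ≫ e = e := by
    rw [he]
    simp only [Category.assoc]
    rw [reassoc_of% hIsplit]
  have he2 : (𝟙 X - e) ≫ e = 0 := by
    rw [Preadditive.sub_comp, Category.id_comp, hee, sub_self]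
  set κ : (kernel e : C) ⟶ X := kernel.ι e with hκ
  set ρ : X ⟶ (kernel e : C) := kernel.lift e (𝟙 X - e) he2 with hρ
  have hρκ : ρ ≫ κ = 𝟙 X - e := kernel.lift_ι _ _ _
  have hκρ : κ ≫ ρ = 𝟙 (kernel e : C) := by
    rw [← cancel_mono κ, Category.assoc, hρκ, Preadditive.comp_sub, Category.comp_id,
      Category.id_comp, hκ, kernel.condition, sub_zero]
  have hsum : (π ≫ inv g) ≫ ι + ρ ≫ κ = 𝟙 X := by
    rw [hρκ, Category.assoc, ← he, add_sub_cancel]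
  obtain ⟨iso⟩ := aux_biprod_iso (π ≫ inv g) ι ρ κ hIsplit hκρ hsum
  rcases hind _ _ iso with hzero | hzero
  · -- image is zero : f is nilpotent
    right
    refine ⟨n, ?_⟩
    have hι0 : ι = 0 := hzero.eq_of_src ι 0
    show Fn = 0
    rw [← fac, hι0, comp_zero]
  · -- kernel is zero : f is an isomorphism
    left
    have hκ0 : κ = 0 := hzero.eq_of_src κ 0
    have he1 : e = 𝟙 X := by
      have h0 : 𝟙 X - e = 0 := by rw [← hρκ, hκ0, comp_zero]
      have := sub_eq_zero.mp h0
      exact this.symm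
    have hsplit : (π ≫ inv g) ≫ ι = 𝟙 X := by rw [Category.assoc, ← he, he1]
    haveI : IsSplitEpi ι := IsSplitEpi.mk' ⟨π ≫ inv g, hsplit⟩
    haveI : IsSplitMono π := IsSplitMono.mk' ⟨inv g ≫ ι, by
      rw [← Category.assoc]; exact hsplit⟩
    haveI : IsIso ι := isIso_of_mono_of_epi ι
    haveI : IsIso π := isIso_of_mono_of_epi π
    haveI hFniso : IsIso Fn := by rw [← fac]; infer_instance
    have hpow1 : Fn = f ≫ ((f ^ (n₁ + n₂) : End X) : X ⟶ X) := by
      rw [hFn, hn, pow_succ]; rfl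
    have hpow2 : Fn = ((f ^ (n₁ + n₂) : End X) : X ⟶ X) ≫ f := by
      rw [hFn, hn, pow_succ']; rfl
    haveI hm1 : Mono (f ≫ ((f ^ (n₁ + n₂) : End X) : X ⟶ X)) := by rw [← hpow1]; infer_instance
    haveI he1' : Epi (((f ^ (n₁ + n₂) : End X) : X ⟶ X) ≫ f) := by rw [← hpow2]; infer_instance
    haveI : Mono (f : X ⟶ X) := mono_of_mono f ((f ^ (n₁ + n₂) : End X) : X ⟶ X)
    haveI : Epi (f : X ⟶ X) := epi_of_epi ((f ^ (n₁ + n₂) : End X) : X ⟶ X) f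
    haveI : IsIso (f : X ⟶ X) := isIso_of_mono_of_epi _
    exact (isUnit_iff_isIso f).2 inferInstance

end Aux

/-- In an abelian category, a nonzero object of finite length
(both artinian and noetherian) is indecomposable if and only if its
endomorphism ring is local. -/
theorem stmt11 {C : Type u} [Category.{v} C] [Abelian C]
    (X : C) (hX : ¬ IsZero X) (hart : IsArtinianObject X)
    (hnoeth : IsNoetherianObject X) :
    IndecomposableObj X ↔ IsLocalRing (End X) := by
  constructor
  · rintro ⟨-, hind⟩
    haveI : Nontrivial (End X) := by
      refine ⟨⟨1, 0, fun h => hX ?_⟩⟩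
      rw [IsZero.iff_id_eq_zero]
      exact h
    refine ⟨fun {a b} hab => ?_⟩
    rcases aux_unit_or_nilpotent hart hnoeth hind a with h | h
    · exact Or.inl h
    · refine Or.inr ?_
      have hb : b = 1 - a := by rw [← hab, add_sub_cancel_left]
      rw [hb]
      exact h.isUnit_one_sub
  · intro hloc
    refine ⟨hX, fun Y Z iso => ?_⟩
    let p : End X := iso.hom ≫ biprod.fst ≫ biprod.inl ≫ iso.inv
    let q : End X := iso.hom ≫ biprod.snd ≫ biprod.inr ≫ iso.inv
    have hsum : p + q = 1 := by
      show iso.hom ≫ biprod.fst ≫ biprod.inl ≫ iso.inv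
          + iso.hom ≫ biprod.snd ≫ biprod.inr ≫ iso.inv = 𝟙 X
      have h1 : biprod.fst ≫ biprod.inl ≫ iso.inv + biprod.snd ≫ biprod.inr ≫ iso.inv
          = (biprod.fst ≫ biprod.inl + biprod.snd ≫ biprod.inr) ≫ iso.inv := by
        rw [Preadditive.add_comp, Category.assoc, Category.assoc]
      rw [← Preadditive.comp_add, h1, biprod.total, Category.id_comp, iso.hom_inv_id]
    have hp2 : p * p = p := by
      show (iso.hom ≫ biprod.fst ≫ biprod.inl ≫ iso.inv) ≫
          (iso.hom ≫ biprod.fst ≫ biprod.inl ≫ iso.inv)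
          = iso.hom ≫ biprod.fst ≫ biprod.inl ≫ iso.inv
      simp
    have hq2 : q * q = q := by
      show (iso.hom ≫ biprod.snd ≫ biprod.inr ≫ iso.inv) ≫
          (iso.hom ≫ biprod.snd ≫ biprod.inr ≫ iso.inv)
          = iso.hom ≫ biprod.snd ≫ biprod.inr ≫ iso.inv
      simp
    rcases IsLocalRing.isUnit_or_isUnit_of_add_one hsum with hu | hu
    · -- p is a unit, hence = 1, so Z is zero
      right
      have hp1 : p = 1 := hu.mul_left_cancel (by rw [hp2, mul_one])
      have hq0 : q = 0 := by
        have h := hsum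
        rw [hp1] at h
        exact add_eq_left.mp h
      rw [IsZero.iff_id_eq_zero]
      have h2 : iso.inv ≫ (iso.hom ≫ biprod.snd ≫ biprod.inr ≫ iso.inv) ≫ iso.hom
          = iso.inv ≫ (0 : X ⟶ X) ≫ iso.hom := by
        show iso.inv ≫ (q : X ⟶ X) ≫ iso.hom = _
        rw [hq0]
      have hsi : (biprod.snd ≫ biprod.inr : Y ⊞ Z ⟶ Y ⊞ Z) = 0 := by simpa using h2
      have h3 : (biprod.inr : Z ⟶ Y ⊞ Z) ≫ (biprod.snd ≫ biprod.inr : Y ⊞ Z ⟶ Y ⊞ Z) ≫ biprod.snd = 𝟙 Z := by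
        simp
      rw [hsi] at h3
      simpa using h3.symm
    · -- q is a unit, hence = 1, so Y is zero
      left
      have hq1 : q = 1 := hu.mul_left_cancel (by rw [hq2, mul_one])
      have hp0 : p = 0 := by
        have h := hsum
        rw [hq1] at h
        exact add_eq_right.mp h
      rw [IsZero.iff_id_eq_zero]
      have h2 : iso.inv ≫ (iso.hom ≫ biprod.fst ≫ biprod.inl ≫ iso.inv) ≫ iso.hom
          = iso.inv ≫ (0 : X ⟶ X) ≫ iso.hom := by
        show iso.inv ≫ (p : X ⟶ X) ≫ iso.hom = _
        rw [hp0]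
      have hsi : (biprod.fst ≫ biprod.inl : Y ⊞ Z ⟶ Y ⊞ Z) = 0 := by simpa using h2
      have h3 : (biprod.inl : Y ⟶ Y ⊞ Z) ≫ (biprod.fst ≫ biprod.inl : Y ⊞ Z ⟶ Y ⊞ Z) ≫ biprod.fst = 𝟙 Y := by
        simp
      rw [hsi] at h3
      simpa using h3.symm
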